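/- Fix h ∈ ℝ with κ(h) > 0, M ≥ 0, f ∈ C(M), and set δ = min{1/8, 1/(8|h|), 1/(8M)}. Let μ ∈ ℝ and let φ ∈ C²([0,1]) satisfy φ(0) = 0, φ'(0) = 1, φ''(0) = 0, φ > 0 on (0,1], u(r) = rφ'(r)/φ(r) ∈ U(δ) for all r ∈ [0,1], and the equation φ''(r) + (2/r)(φ'(r) − φ(r)/r) = V₁(u(r)) (1/r)(φ'(r) − φ(r)/r) + μ (κ(h) + β(f))^{−1} r v(r)^{1−h/3} V₂(u(r)) for r ∈ (0,1], where v(r) = φ'(r)(φ(r)/r)². If μ > 0, then φ'(r) > φ(r)/r > 1 for all r ∈ (0,1]; if μ < 0, then φ'(r) < φ(r)/r < 1 for all r ∈ (0,1]. -/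

import Mathlib

open Set

noncomputable section

/-- `κ(h) = (h/3)(h/3 − 1)`. -/
def kap (h : ℝ) : ℝ := (h / 3) * (h / 3 - 1)

/-- The interval `U(1/8) = [7/8, 9/8]`. -/
def Iset : Set ℝ := Set.Icc (7/8 : ℝ) (9/8)

/-- The interval `U(a) = {u : |u − 1| ≤ a}`. -/
def Uset (a : ℝ) : Set ℝ := Set.Icc (1 - a) (1 + a)

/-- First derivative of `f` on `U(1/8)`. -/
noncomputable def d1 (f : ℝ → ℝ) : ℝ → ℝ := derivWithin f Iset

/-- Second derivative of `f` on `U(1/8)`. -/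
noncomputable def d2 (f : ℝ → ℝ) : ℝ → ℝ := derivWithin (d1 f) Iset

/-- Third derivative of `f` on `U(1/8)`. -/
noncomputable def d3 (f : ℝ → ℝ) : ℝ → ℝ := derivWithin (d2 f) Iset

/-- The class `C(M)`: `f` is C³ on `U(1/8)`, `f(1) = 1`, `f'(1) = 0`, `f''(1) > 0`,
and `|f'''| ≤ M f''(1)` on `U(1/8)`. -/
def CM (M : ℝ) (f : ℝ → ℝ) : Prop :=
  ContDiffOn ℝ 3 f Iset ∧ f 1 = 1 ∧ d1 f 1 = 0 ∧ 0 < d2 f 1 ∧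
    ∀ u ∈ Iset, |d3 f u| ≤ M * d2 f 1

/-- `δ = min{1/8, 1/(8|h|), 1/(8M)}`, where for `M = 0` the term `1/(8M)` is
interpreted as `+∞`. -/
noncomputable def del (h M : ℝ) : ℝ :=
  if M = 0 then min (1/8) (1 / (8 * |h|))
  else min (1/8) (min (1 / (8 * |h|)) (1 / (8 * M)))

/-- The quotient `f'(u)/(u−1)`, extended continuously at `u = 1` by `f''(1)`. -/
noncomputable def Qf (f : ℝ → ℝ) (u : ℝ) : ℝ :=
  if u = 1 then d2 f 1 else d1 f u / (u - 1)

/-- `U₁(u) = κ(h)f(u) + (2h/3)uf'(u) + u²f''(u)`. -/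
noncomputable def U1 (h : ℝ) (f : ℝ → ℝ) (u : ℝ) : ℝ :=
  kap h * f u + (2 * h / 3) * u * d1 f u + u ^ 2 * d2 f u

/-- `U₂(u) = 2κ(h)uf(u) + (h/3 − 1)u²f'(u) + (2u² + u³)f'(u)/(u−1) − u³f''(u)`. -/
noncomputable def U2 (h : ℝ) (f : ℝ → ℝ) (u : ℝ) : ℝ :=
  2 * kap h * u * f u + (h / 3 - 1) * u ^ 2 * d1 f u
    + (2 * u ^ 2 + u ^ 3) * Qf f u - u ^ 3 * d2 f u

/-- `V₁(u) = (2U₁(u) − U₂(u))/U₁(u)`. -/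
noncomputable def V1 (h : ℝ) (f : ℝ → ℝ) (u : ℝ) : ℝ :=
  (2 * U1 h f u - U2 h f u) / U1 h f u

/-- `V₂(u) = (κ(h) + β(f)) u / U₁(u)`. -/
noncomputable def V2 (h : ℝ) (f : ℝ → ℝ) (u : ℝ) : ℝ :=
  (kap h + d2 f 1) * u / U1 h f u

/-- `λ₁(r) = φ'(r)` (derivative within `[0,1]`). -/
noncomputable def lam1 (φ : ℝ → ℝ) : ℝ → ℝ := derivWithin φ (Set.Icc 0 1)

/-- `λ₂(r) = φ(r)/r`, with the convention `φ(r)/r = 1` at `r = 0`. -/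
noncomputable def lam2 (φ : ℝ → ℝ) (r : ℝ) : ℝ := if r = 0 then 1 else φ r / r

/-- `u(r) = rφ'(r)/φ(r) = λ₁(r)/λ₂(r)`. -/
noncomputable def uu (φ : ℝ → ℝ) (r : ℝ) : ℝ := lam1 φ r / lam2 φ r

/-- `v(r) = φ'(r)(φ(r)/r)² = λ₁(r)λ₂(r)²`. -/
noncomputable def vv (φ : ℝ → ℝ) (r : ℝ) : ℝ := lam1 φ r * (lam2 φ r) ^ 2

/-!
Write `λ₁ = φ'`, `λ₂ = φ/r` (so `λ₂(0) = 1`) and `ψ = λ₁ − λ₂`. Since `λ₂' = ψ/r`, the radial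
equation is the linear equation `ψ' = ((V₁(u) − 3)/r) ψ + μ G` with `ψ(0) = 0` and `G > 0`.
Mean value estimates for `f ∈ C(M)` on `U(δ)` give `U₁ ≥ κ + (285/512) β > 0` and `2U₁ − U₂ ≤ 3U₁`,
i.e. `V₁ ≤ 3`, so the coefficient of `ψ` is nonpositive. Then `ψ` cannot leave `0` against the
sign of `μ`: at a minimum of `σψ ≤ 0` (`σ = sign μ`) its left derivative would be positive.
Hence `σψ > 0` on `(0, 1]`, so `σλ₂` is strictly increasing and `σλ₂ > σ`.
-/

lemma abs_mul_le_of_abs_le {a b c d : ℝ} (ha : |a| ≤ c) (hb : |b| ≤ d) : |a * b| ≤ c * d := by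
  rw [abs_mul]
  exact mul_le_mul ha hb (abs_nonneg b) ((abs_nonneg a).trans ha)

section Uset

variable {δ x : ℝ}

lemma abs_sub_one_le_of_mem_Uset (hx : x ∈ Uset δ) : |x - 1| ≤ δ :=
  abs_sub_le_iff.2 ⟨by linarith [hx.2], by linarith [hx.1]⟩

lemma nonneg_of_mem_Uset (hx : x ∈ Uset δ) : 0 ≤ δ := by
  linarith [hx.1, hx.2]

lemma one_mem_Uset (hx : x ∈ Uset δ) : (1 : ℝ) ∈ Uset δ :=
  ⟨by linarith [hx.1, hx.2], by linarith [hx.1, hx.2]⟩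

lemma Uset_subset_Iset (hδ : δ ≤ 1 / 8) : Uset δ ⊆ Iset :=
  fun _ hx => ⟨by linarith [hx.1], by linarith [hx.2]⟩

lemma abs_sub_le_of_hasDerivWithinAt_Uset {g g' : ℝ → ℝ} {C : ℝ}
    (hg : ∀ y ∈ Uset δ, HasDerivWithinAt g (g' y) (Uset δ) y)
    (hC : ∀ y ∈ Uset δ, |g' y| ≤ C) (hx : x ∈ Uset δ) : |g x - g 1| ≤ C * |x - 1| :=
  (convex_Icc _ _).norm_image_sub_le_of_norm_hasDerivWithin_le hg hC (one_mem_Uset hx) hx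

end Uset

section Iset

variable {f : ℝ → ℝ} {s : Set ℝ} {x : ℝ}

lemma contDiffOn_d1 {n : ℕ} (hf : ContDiffOn ℝ (n + 1) f Iset) : ContDiffOn ℝ n (d1 f) Iset :=
  hf.derivWithin (uniqueDiffOn_Icc (by norm_num)) le_rfl

lemma hasDerivWithinAt_d1 (hf : ContDiffOn ℝ 1 f Iset) (hs : s ⊆ Iset) (hx : x ∈ s) :
    HasDerivWithinAt f (d1 f x) s x :=
  (hf.differentiableOn one_ne_zero x (hs hx)).hasDerivWithinAt.mono hs

lemma hasDerivWithinAt_d2 (hf : ContDiffOn ℝ 2 f Iset) (hs : s ⊆ Iset) (hx : x ∈ s) :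
    HasDerivWithinAt (d1 f) (d2 f x) s x :=
  hasDerivWithinAt_d1 (contDiffOn_d1 hf) hs hx

lemma hasDerivWithinAt_d3 (hf : ContDiffOn ℝ 3 f Iset) (hs : s ⊆ Iset) (hx : x ∈ s) :
    HasDerivWithinAt (d2 f) (d3 f x) s x :=
  hasDerivWithinAt_d2 (contDiffOn_d1 hf) hs hx

end Iset

namespace CM

variable {M δ u : ℝ} {f : ℝ → ℝ}

lemma apply_one (hf : CM M f) : f 1 = 1 := hf.2.1

lemma d1_one (hf : CM M f) : d1 f 1 = 0 := hf.2.2.1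

lemma d2_one_pos (hf : CM M f) : 0 < d2 f 1 := hf.2.2.2.1

lemma abs_d3_le (hf : CM M f) (hu : u ∈ Iset) : |d3 f u| ≤ M * d2 f 1 := hf.2.2.2.2 u hu

lemma abs_d2_sub_le (hf : CM M f) (hδ : δ ≤ 1 / 8) (hMδ : M * δ ≤ 1 / 8) (hu : u ∈ Uset δ) :
    |d2 f u - d2 f 1| ≤ d2 f 1 / 8 := by
  have hβ : 0 < d2 f 1 := hf.d2_one_pos
  have hsub := Uset_subset_Iset hδ
  calc |d2 f u - d2 f 1|
      ≤ M * d2 f 1 * |u - 1| :=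
        abs_sub_le_of_hasDerivWithinAt_Uset (fun y hy => hasDerivWithinAt_d3 hf.1 hsub hy)
          (fun y hy => hf.abs_d3_le (hsub hy)) hu
    _ ≤ M * d2 f 1 * δ := by
        gcongr
        · exact (abs_nonneg _).trans (hf.abs_d3_le (hsub hu))
        · exact abs_sub_one_le_of_mem_Uset hu
    _ = (M * δ) * d2 f 1 := by ring
    _ ≤ d2 f 1 / 8 := by nlinarith

lemma abs_d1_le (hf : CM M f) (hδ : δ ≤ 1 / 8) (hMδ : M * δ ≤ 1 / 8) (hu : u ∈ Uset δ) :
    |d1 f u| ≤ 9 / 8 * d2 f 1 * |u - 1| := by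
  have hd2 : ∀ y ∈ Uset δ, |d2 f y| ≤ 9 / 8 * d2 f 1 := fun y hy => by
    have := abs_le.1 (hf.abs_d2_sub_le hδ hMδ hy)
    exact abs_le.2 ⟨by linarith [hf.d2_one_pos], by linarith⟩
  simpa [hf.d1_one] using abs_sub_le_of_hasDerivWithinAt_Uset
    (fun y hy => hasDerivWithinAt_d2 (hf.1.of_le (by norm_num)) (Uset_subset_Iset hδ) hy) hd2 hu

lemma abs_sub_one_le (hf : CM M f) (hδ : δ ≤ 1 / 8) (hMδ : M * δ ≤ 1 / 8) (hu : u ∈ Uset δ) :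
    |f u - 1| ≤ 9 / 8 * d2 f 1 * δ ^ 2 := by
  have hd1 : ∀ y ∈ Uset δ, |d1 f y| ≤ 9 / 8 * d2 f 1 * δ := fun y hy =>
    (hf.abs_d1_le hδ hMδ hy).trans <| by
      gcongr
      · linarith [hf.d2_one_pos]
      · exact abs_sub_one_le_of_mem_Uset hy
  have := abs_sub_le_of_hasDerivWithinAt_Uset
    (fun y hy => hasDerivWithinAt_d1 (hf.1.of_le (by norm_num)) (Uset_subset_Iset hδ) hy) hd1 hu
  rw [hf.apply_one] at this
  calc |f u - 1| ≤ 9 / 8 * d2 f 1 * δ * |u - 1| := this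
    _ ≤ 9 / 8 * d2 f 1 * δ * δ := by
        gcongr
        · exact (abs_nonneg _).trans (hd1 u hu)
        · exact abs_sub_one_le_of_mem_Uset hu
    _ = 9 / 8 * d2 f 1 * δ ^ 2 := by ring

/-- Mean value theorem for `y ↦ f'(y) − β (y − 1)`, which vanishes at `1` and whose derivative
`f'' − β` is at most `β/8`. -/
lemma abs_Qf_sub_le (hf : CM M f) (hδ : δ ≤ 1 / 8) (hMδ : M * δ ≤ 1 / 8) (hu : u ∈ Uset δ) :
    |Qf f u - d2 f 1| ≤ d2 f 1 / 8 := by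
  have hβ : 0 < d2 f 1 := hf.d2_one_pos
  by_cases hu1 : u = 1
  · simp only [Qf, hu1, if_true, sub_self, abs_zero]
    positivity
  have hg : ∀ y ∈ Uset δ, HasDerivWithinAt (fun y => d1 f y - d2 f 1 * (y - 1)) (d2 f y - d2 f 1)
      (Uset δ) y := fun y hy => by
    have := (hasDerivWithinAt_d2 (hf.1.of_le (by norm_num)) (Uset_subset_Iset hδ) hy).sub
      (((hasDerivWithinAt_id y _).sub_const 1).const_mul (d2 f 1))
    rwa [mul_one] at this
  have hmvt := abs_sub_le_of_hasDerivWithinAt_Uset hg (fun y hy => hf.abs_d2_sub_le hδ hMδ hy) hu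
  have hQ : Qf f u - d2 f 1 = (d1 f u - d2 f 1 * (u - 1)) / (u - 1) := by
    simp only [Qf, if_neg hu1]
    field_simp [sub_ne_zero.2 hu1]
  rw [hQ, abs_div, div_le_iff₀ (abs_pos.2 (sub_ne_zero.2 hu1))]
  simpa [hf.d1_one] using hmvt

end CM

section del

variable {h M : ℝ}

lemma del_le_one_div_eight : del h M ≤ 1 / 8 := by
  unfold del; split_ifs <;> simp

lemma abs_mul_del_le : |h| * del h M ≤ 1 / 8 := by
  rcases eq_or_ne h 0 with rfl | hh
  · norm_num
  have hle : del h M ≤ 1 / (8 * |h|) := by unfold del; split_ifs <;> simp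
  calc |h| * del h M ≤ |h| * (1 / (8 * |h|)) := by gcongr
    _ = 1 / 8 := by field_simp

lemma mul_del_le (hδ : 0 ≤ del h M) : M * del h M ≤ 1 / 8 := by
  rcases le_or_gt M 0 with hM | hM
  · nlinarith
  have hle : del h M ≤ 1 / (8 * M) := by unfold del; split_ifs <;> simp_all [hM.ne']
  calc M * del h M ≤ M * (1 / (8 * M)) := by gcongr
    _ = 1 / 8 := by field_simp

end del

lemma kap_mul_sq_le {h δ : ℝ} (hδ0 : 0 ≤ δ) (hδ : δ ≤ 1 / 8) (hhδ : |h| * δ ≤ 1 / 8) :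
    kap h * δ ^ 2 ≤ 1 / 144 := by
  have habs : |h * δ| ≤ 1 / 8 := by rwa [abs_mul, abs_of_nonneg hδ0]
  have hsq : (h * δ) ^ 2 ≤ 1 / 64 := by nlinarith [sq_abs (h * δ), abs_nonneg (h * δ)]
  have hlin : -(h * δ) * δ ≤ 1 / 64 := by nlinarith [neg_abs_le (h * δ)]
  calc kap h * δ ^ 2 = (h * δ) ^ 2 / 9 + -(h * δ) * δ / 3 := by unfold kap; ring
    _ ≤ 1 / 144 := by linarith

section bounds

variable {h M u : ℝ} {f : ℝ → ℝ}

lemma U1_eq :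
    U1 h f u = kap h + kap h * (f u - 1) + 2 / 3 * u * (h * d1 f u) + u ^ 2 * d2 f u := by
  unfold U1; ring

lemma two_mul_U1_sub_U2_eq :
    2 * U1 h f u - U2 h f u = 2 * kap h * (1 - u) + 2 * (kap h * (f u - 1)) * (1 - u)
      + (4 / 3 * u - 1 / 3 * u ^ 2) * (h * d1 f u) + u ^ 2 * d1 f u
      + (2 * u ^ 2 + u ^ 3) * (d2 f u - Qf f u) := by
  unfold U1 U2; ring

lemma mem_Icc_of_mem_Uset_del (hu : u ∈ Uset (del h M)) : u ∈ Icc (7 / 8 : ℝ) (9 / 8) :=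
  Uset_subset_Iset del_le_one_div_eight hu

lemma CM.abs_d1_le_mul_del (hf : CM M f) (hu : u ∈ Uset (del h M)) :
    |d1 f u| ≤ 9 / 8 * d2 f 1 * del h M := by
  have hδ0 := nonneg_of_mem_Uset hu
  calc |d1 f u| ≤ 9 / 8 * d2 f 1 * |u - 1| :=
        hf.abs_d1_le del_le_one_div_eight (mul_del_le hδ0) hu
    _ ≤ 9 / 8 * d2 f 1 * del h M := by
        have hβ := hf.d2_one_pos
        gcongr
        exact abs_sub_one_le_of_mem_Uset hu

lemma CM.abs_kap_mul_sub_one_le (hf : CM M f) (hu : u ∈ Uset (del h M)) (hκ : 0 < kap h) :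
    |kap h * (f u - 1)| ≤ d2 f 1 / 128 := by
  have hδ0 := nonneg_of_mem_Uset hu
  have hβ : 0 < d2 f 1 := hf.d2_one_pos
  have hκδ := kap_mul_sq_le hδ0 del_le_one_div_eight abs_mul_del_le
  calc |kap h * (f u - 1)| = kap h * |f u - 1| := by rw [abs_mul, abs_of_pos hκ]
    _ ≤ kap h * (9 / 8 * d2 f 1 * del h M ^ 2) := by
        gcongr
        exact hf.abs_sub_one_le del_le_one_div_eight (mul_del_le hδ0) hu
    _ = 9 / 8 * d2 f 1 * (kap h * del h M ^ 2) := by ring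
    _ ≤ d2 f 1 / 128 := by nlinarith

lemma CM.abs_mul_d1_le (hf : CM M f) (hu : u ∈ Uset (del h M)) :
    |h * d1 f u| ≤ 9 / 64 * d2 f 1 := by
  have hβ : 0 < d2 f 1 := hf.d2_one_pos
  calc |h * d1 f u| = |h| * |d1 f u| := abs_mul _ _
    _ ≤ |h| * (9 / 8 * d2 f 1 * del h M) := by
        gcongr
        exact hf.abs_d1_le_mul_del hu
    _ = 9 / 8 * d2 f 1 * (|h| * del h M) := by ring
    _ ≤ 9 / 64 * d2 f 1 := by nlinarith [abs_mul_del_le (h := h) (M := M)]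

lemma CM.abs_d1_le_of_mem_Uset_del (hf : CM M f) (hu : u ∈ Uset (del h M)) :
    |d1 f u| ≤ 9 / 64 * d2 f 1 := by
  have := hf.abs_d1_le_mul_del hu
  nlinarith [hf.d2_one_pos, del_le_one_div_eight (h := h) (M := M)]

-- `285/512 = (7/8)³ − 1/128 − (2/3)(9/8)(9/64)`: the worst cases of the three terms of `U1_eq`.
lemma CM.kap_add_le_U1 (hf : CM M f) (hu : u ∈ Uset (del h M)) (hκ : 0 < kap h) :
    kap h + 285 / 512 * d2 f 1 ≤ U1 h f u := by
  have hδ0 := nonneg_of_mem_Uset hu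
  have hY := abs_le.1 (hf.abs_kap_mul_sub_one_le hu hκ)
  have hX := abs_le.1 (hf.abs_mul_d1_le hu)
  have hC := abs_le.1 (hf.abs_d2_sub_le del_le_one_div_eight (mul_del_le hδ0) hu)
  have hu₁ := (mem_Icc_of_mem_Uset_del hu).1
  rw [U1_eq]
  nlinarith [mul_nonneg (sub_nonneg.2 hu₁) (sub_nonneg.2 hX.1),
    mul_nonneg (sub_nonneg.2 hu₁) (sub_nonneg.2 hu₁),
    mul_nonneg (sub_nonneg.2 hu₁) (sub_nonneg.2 hC.1)]

lemma CM.two_mul_U1_sub_U2_le (hf : CM M f) (hu : u ∈ Uset (del h M)) (hκ : 0 < kap h) :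
    2 * U1 h f u - U2 h f u ≤ 3 * (kap h + 285 / 512 * d2 f 1) := by
  have hδ0 := nonneg_of_mem_Uset hu
  have hβ : 0 < d2 f 1 := hf.d2_one_pos
  obtain ⟨hu₁, hu₂⟩ := mem_Icc_of_mem_Uset_del hu
  have hC := hf.abs_d2_sub_le del_le_one_div_eight (mul_del_le hδ0) hu
  have hQ := hf.abs_Qf_sub_le del_le_one_div_eight (mul_del_le hδ0) hu
  have hCQ : |d2 f u - Qf f u| ≤ d2 f 1 / 4 := by
    calc |d2 f u - Qf f u| = |(d2 f u - d2 f 1) - (Qf f u - d2 f 1)| := by ring_nf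
      _ ≤ |d2 f u - d2 f 1| + |Qf f u - d2 f 1| := abs_sub _ _
      _ ≤ d2 f 1 / 4 := by linarith
  have h1 := abs_mul_le_of_abs_le (hf.abs_kap_mul_sub_one_le hu hκ)
    (abs_le.2 ⟨by linarith, by linarith⟩ : |1 - u| ≤ 1 / 8)
  have h2 := abs_mul_le_of_abs_le
    (abs_le.2 ⟨by nlinarith, by nlinarith⟩ : |4 / 3 * u - 1 / 3 * u ^ 2| ≤ 123 / 64)
    (hf.abs_mul_d1_le hu)
  have h3 := abs_mul_le_of_abs_le (abs_le.2 ⟨by nlinarith, by nlinarith⟩ : |u ^ 2| ≤ 81 / 64)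
    (hf.abs_d1_le_of_mem_Uset_del hu)
  have h4 := abs_mul_le_of_abs_le
    (abs_le.2 ⟨by nlinarith, by nlinarith⟩ : |2 * u ^ 2 + u ^ 3| ≤ 2025 / 512) hCQ
  have h5 : 2 * kap h * (1 - u) ≤ kap h / 4 := by nlinarith
  rw [two_mul_U1_sub_U2_eq]
  linarith [le_abs_self (kap h * (f u - 1) * (1 - u)),
    le_abs_self ((4 / 3 * u - 1 / 3 * u ^ 2) * (h * d1 f u)), le_abs_self (u ^ 2 * d1 f u),
    le_abs_self ((2 * u ^ 2 + u ^ 3) * (d2 f u - Qf f u))]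

lemma CM.V1_le_three (hf : CM M f) (hu : u ∈ Uset (del h M)) (hκ : 0 < kap h) :
    V1 h f u ≤ 3 := by
  have hU1 := hf.kap_add_le_U1 hu hκ
  rw [V1, div_le_iff₀ (by linarith [hf.d2_one_pos])]
  linarith [hf.two_mul_U1_sub_U2_le hu hκ]

end bounds

lemma HasDerivWithinAt.nonpos_of_isMinOn_Icc_right {g : ℝ → ℝ} {g' a b : ℝ}
    (hg : HasDerivWithinAt g g' (Icc a b) b) (hmin : IsMinOn g (Icc a b) b) (hab : a < b) :
    g' ≤ 0 := by
  have hcone : a - b ∈ posTangentConeAt (Icc a b) b :=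
    sub_mem_posTangentConeAt_of_segment_subset (segment_eq_Icc' b a ▸ by simp [hab.le])
  have := hmin.localize.hasFDerivWithinAt_nonneg hg.hasFDerivWithinAt hcone
  simp only [ContinuousLinearMap.toSpanSingleton_apply, smul_eq_mul] at this
  nlinarith

theorem pos_of_hasDerivWithinAt_eq_mul_add {ψ a g : ℝ → ℝ} {x₀ b : ℝ}
    (hψ : ContinuousOn ψ (Icc x₀ b)) (hψ₀ : ψ x₀ = 0)
    (hψ' : ∀ r ∈ Ioc x₀ b, HasDerivWithinAt ψ (a r * ψ r + g r) (Icc x₀ b) r)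
    (ha : ∀ r ∈ Ioc x₀ b, a r ≤ 0) (hg : ∀ r ∈ Ioc x₀ b, 0 < g r) :
    ∀ r ∈ Ioc x₀ b, 0 < ψ r := by
  intro r hr
  by_contra! hψr
  obtain ⟨c, hc, hmin⟩ := isCompact_Icc.exists_isMinOn (nonempty_Icc.2 hr.1.le)
    (hψ.mono (Icc_subset_Icc_right hr.2))
  obtain ⟨m, hm, hmmin, hψm⟩ : ∃ m ∈ Ioc x₀ r, IsMinOn ψ (Icc x₀ r) m ∧ ψ m ≤ 0 := by
    by_cases hψc : ψ c < 0
    · refine ⟨c, ⟨lt_of_le_of_ne hc.1 ?_, hc.2⟩, hmin, hψc.le⟩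
      rintro rfl
      exact hψc.ne hψ₀
    · exact ⟨r, right_mem_Ioc.2 hr.1, fun y hy => hψr.trans ((not_lt.1 hψc).trans (hmin hy)), hψr⟩
  have hmb : m ∈ Ioc x₀ b := ⟨hm.1, hm.2.trans hr.2⟩
  have hderiv := ((hψ' m hmb).mono (Icc_subset_Icc_right hmb.2)).nonpos_of_isMinOn_Icc_right
    (hmmin.on_subset (Icc_subset_Icc_right hm.2)) hm.1
  nlinarith [ha m hmb, hg m hmb]

theorem sign_mul_pos_of_hasDerivWithinAt {ψ ℓ a g : ℝ → ℝ} {σ b : ℝ}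
    (hψ : ContinuousOn ψ (Icc 0 b)) (hψ₀ : ψ 0 = 0)
    (hψ' : ∀ r ∈ Ioc 0 b, HasDerivWithinAt ψ (a r * ψ r + g r) (Icc 0 b) r)
    (ha : ∀ r ∈ Ioc 0 b, a r ≤ 0) (hg : ∀ r ∈ Ioc 0 b, 0 < σ * g r)
    (hℓ : ContinuousOn ℓ (Icc 0 b))
    (hℓ' : ∀ r ∈ Ioc 0 b, HasDerivWithinAt ℓ (ψ r / r) (Icc 0 b) r) :
    ∀ r ∈ Ioc 0 b, 0 < σ * ψ r ∧ σ * ℓ 0 < σ * ℓ r := by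
  have hσψ : ∀ r ∈ Ioc (0 : ℝ) b, 0 < σ * ψ r :=
    pos_of_hasDerivWithinAt_eq_mul_add (hψ.const_smul σ) (by simp [hψ₀])
      (fun r hr => ((hψ' r hr).const_mul σ).congr_deriv (by ring)) ha hg
  have hmono : StrictMonoOn (fun r => σ * ℓ r) (Icc 0 b) := by
    refine strictMonoOn_of_hasDerivWithinAt_pos (f' := fun r => σ * (ψ r / r)) (convex_Icc 0 b)
      (hℓ.const_smul σ) (fun r hr => ?_) (fun r hr => ?_)
    · rw [interior_Icc] at hr ⊢
      exact ((hℓ' r (Ioo_subset_Ioc_self hr)).const_mul σ).mono Ioo_subset_Icc_self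
    · rw [interior_Icc] at hr
      rw [← mul_div_assoc]
      exact div_pos (hσψ r (Ioo_subset_Ioc_self hr)) hr.1
  exact fun r hr =>
    ⟨hσψ r hr, hmono (left_mem_Icc.2 (hr.1.le.trans hr.2)) (Ioc_subset_Icc_self hr) hr.1⟩

section lam

variable {φ : ℝ → ℝ} {s : Set ℝ} {r : ℝ}

@[simp]
lemma lam2_zero : lam2 φ 0 = 1 := if_pos rfl

lemma lam2_of_ne_zero (hr : r ≠ 0) : lam2 φ r = φ r / r := if_neg hr

lemma lam2_pos (hr : 0 < r) (hφ : 0 < φ r) : 0 < lam2 φ r := by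
  rw [lam2_of_ne_zero hr.ne']
  exact div_pos hφ hr

lemma lam1_pos (hlam2 : 0 < lam2 φ r) (hu : 0 < uu φ r) : 0 < lam1 φ r := by
  rw [← div_mul_cancel₀ (lam1 φ r) hlam2.ne']
  exact mul_pos hu hlam2

lemma lam2_eventuallyEq (hr : r ≠ 0) : lam2 φ =ᶠ[nhds r] fun y => φ y / y :=
  (eventually_ne_nhds hr).mono fun _ hy => lam2_of_ne_zero hy

/-- Away from `0`, `λ₂` is the slope of `φ` at `0`, which tends to `φ'(0) = 1`. -/
lemma continuousOn_lam2 (hφ : ContinuousOn φ s) (hφ₀ : φ 0 = 0) (hd : HasDerivWithinAt φ 1 s 0) :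
    ContinuousOn (lam2 φ) s := by
  intro x hx
  rcases eq_or_ne x 0 with rfl | hx0
  · rw [← continuousWithinAt_sdiff_self, ContinuousWithinAt, lam2_zero]
    refine (hasDerivWithinAt_iff_tendsto_slope.1 hd).congr' ?_
    filter_upwards [self_mem_nhdsWithin] with y hy
    rw [slope_def_field, hφ₀, sub_zero, sub_zero, lam2_of_ne_zero hy.2]
  · exact ((hφ x hx).div continuousWithinAt_id hx0).congr_of_eventuallyEq
      (nhdsWithin_le_nhds (lam2_eventuallyEq hx0)) (lam2_of_ne_zero hx0)

lemma HasDerivWithinAt.lam2 {φ' : ℝ} (hφ : HasDerivWithinAt φ φ' s r) (hr : r ≠ 0) :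
    HasDerivWithinAt (lam2 φ) ((φ' - lam2 φ r) / r) s r := by
  refine ((hφ.div (hasDerivWithinAt_id r s) hr).congr_of_eventuallyEq
    (nhdsWithin_le_nhds (lam2_eventuallyEq hr)) (lam2_of_ne_zero hr)).congr_deriv ?_
  rw [lam2_of_ne_zero hr, id]
  field_simp

end lam

section radial

variable {φ : ℝ → ℝ} {r : ℝ}

lemma ContDiffOn.hasDerivWithinAt_lam1 (hφ : ContDiffOn ℝ 1 φ (Icc 0 1)) (hr : r ∈ Icc 0 1) :
    HasDerivWithinAt φ (lam1 φ r) (Icc 0 1) r :=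
  (hφ.differentiableOn one_ne_zero r hr).hasDerivWithinAt

lemma ContDiffOn.continuousOn_lam1 (hφ : ContDiffOn ℝ 2 φ (Icc 0 1)) :
    ContinuousOn (lam1 φ) (Icc 0 1) :=
  hφ.continuousOn_derivWithin (uniqueDiffOn_Icc one_pos) one_le_two

lemma ContDiffOn.continuousOn_lam2 (hφ : ContDiffOn ℝ 1 φ (Icc 0 1)) (hφ₀ : φ 0 = 0)
    (hφ'₀ : lam1 φ 0 = 1) : ContinuousOn (lam2 φ) (Icc 0 1) :=
  _root_.continuousOn_lam2 hφ.continuousOn hφ₀ <| by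
    simpa only [hφ'₀] using hφ.hasDerivWithinAt_lam1 (left_mem_Icc.2 zero_le_one)

lemma ContDiffOn.hasDerivWithinAt_lam2 (hφ : ContDiffOn ℝ 1 φ (Icc 0 1)) (hr : r ∈ Ioc 0 1) :
    HasDerivWithinAt (lam2 φ) ((lam1 φ r - lam2 φ r) / r) (Icc 0 1) r :=
  (hφ.hasDerivWithinAt_lam1 (Ioc_subset_Icc_self hr)).lam2 hr.1.ne'

lemma ContDiffOn.hasDerivWithinAt_lam1_sub_lam2 {V F : ℝ} (hφ : ContDiffOn ℝ 2 φ (Icc 0 1))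
    (hr : r ∈ Ioc 0 1)
    (hODE : derivWithin (lam1 φ) (Icc 0 1) r + (2 / r) * (lam1 φ r - φ r / r)
      = V * (1 / r) * (lam1 φ r - φ r / r) + F) :
    HasDerivWithinAt (fun r => lam1 φ r - lam2 φ r) ((V - 3) / r * (lam1 φ r - lam2 φ r) + F)
      (Icc 0 1) r := by
  have hlam1 : HasDerivWithinAt (lam1 φ) (derivWithin (lam1 φ) (Icc 0 1) r) (Icc 0 1) r :=
    ((hφ.derivWithin (uniqueDiffOn_Icc one_pos) (m := 1) (by norm_num)).differentiableOn
      one_ne_zero r (Ioc_subset_Icc_self hr)).hasDerivWithinAt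
  refine (hlam1.sub ((hφ.of_le one_le_two).hasDerivWithinAt_lam2 hr)).congr_deriv ?_
  rw [← lam2_of_ne_zero hr.1.ne'] at hODE
  linear_combination hODE

lemma CM.forcing_pos {h M : ℝ} {f : ℝ → ℝ} (hf : CM M f) (hu : uu φ r ∈ Uset (del h M))
    (hκ : 0 < kap h) (hr : 0 < r) (hφ : 0 < φ r) :
    0 < (kap h + d2 f 1)⁻¹ * r * vv φ r ^ (1 - h / 3) * V2 h f (uu φ r) := by
  have hβ := hf.d2_one_pos
  have huu := (mem_Icc_of_mem_Uset_del hu).1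
  have hlam2 := lam2_pos hr hφ
  have hv : 0 < vv φ r := mul_pos (lam1_pos hlam2 (by linarith)) (pow_pos hlam2 2)
  have hV2 : 0 < V2 h f (uu φ r) :=
    div_pos (by nlinarith) (lt_of_lt_of_le (by positivity) (hf.kap_add_le_U1 hu hκ))
  positivity

end radial

theorem principal_stretch_ordering_general
    (h M : ℝ) (hκ : 0 < kap h)
    (f : ℝ → ℝ) (hf : CM M f) (μ : ℝ)
    (φ : ℝ → ℝ)
    (hφC2 : ContDiffOn ℝ 2 φ (Set.Icc 0 1))
    (hφ0 : φ 0 = 0) (hφ'0 : lam1 φ 0 = 1)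
    (hφpos : ∀ r ∈ Set.Ioc (0:ℝ) 1, 0 < φ r)
    (hu : ∀ r ∈ Set.Icc (0:ℝ) 1, uu φ r ∈ Uset (del h M))
    (hODE : ∀ r ∈ Set.Ioc (0:ℝ) 1,
      derivWithin (lam1 φ) (Set.Icc 0 1) r + (2 / r) * (lam1 φ r - φ r / r)
        = V1 h f (uu φ r) * (1 / r) * (lam1 φ r - φ r / r)
          + μ * (kap h + d2 f 1)⁻¹ * r * (vv φ r) ^ (1 - h / 3) * V2 h f (uu φ r)) :
    (0 < μ → ∀ r ∈ Set.Ioc (0:ℝ) 1, φ r / r < lam1 φ r ∧ 1 < φ r / r) ∧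
    (μ < 0 → ∀ r ∈ Set.Ioc (0:ℝ) 1, lam1 φ r < φ r / r ∧ φ r / r < 1) := by
  have hu' : ∀ r ∈ Ioc (0 : ℝ) 1, uu φ r ∈ Uset (del h M) :=
    fun r hr => hu r (Ioc_subset_Icc_self hr)
  have key : ∀ σ : ℝ, 0 < σ * μ → ∀ r ∈ Ioc (0 : ℝ) 1,
      0 < σ * (lam1 φ r - lam2 φ r) ∧ σ * lam2 φ 0 < σ * lam2 φ r := fun σ hσ =>
    sign_mul_pos_of_hasDerivWithinAt (σ := σ) (ψ := fun r => lam1 φ r - lam2 φ r)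
      (g := fun r => μ * (kap h + d2 f 1)⁻¹ * r * vv φ r ^ (1 - h / 3) * V2 h f (uu φ r))
      (hφC2.continuousOn_lam1.sub ((hφC2.of_le one_le_two).continuousOn_lam2 hφ0 hφ'0))
      (by simp [hφ'0]) (fun r hr => hφC2.hasDerivWithinAt_lam1_sub_lam2 hr (hODE r hr))
      (fun r hr => div_nonpos_of_nonpos_of_nonneg
        (by linarith [hf.V1_le_three (hu' r hr) hκ]) hr.1.le)
      (fun r hr => by
        simpa only [mul_assoc] using mul_pos hσ (hf.forcing_pos (hu' r hr) hκ hr.1 (hφpos r hr)))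
      ((hφC2.of_le one_le_two).continuousOn_lam2 hφ0 hφ'0)
      (fun r hr => (hφC2.of_le one_le_two).hasDerivWithinAt_lam2 hr)
  refine ⟨fun hμ r hr => ?_, fun hμ r hr => ?_⟩
  · have := key 1 (by linarith) r hr
    simp only [lam2_zero, lam2_of_ne_zero hr.1.ne'] at this
    constructor <;> linarith
  · have := key (-1) (by linarith) r hr
    simp only [lam2_zero, lam2_of_ne_zero hr.1.ne'] at this
    constructor <;> linarith

/-- strict ordering of the principal stretches for solutions of the
radial equation: `φ' > φ(r)/r > 1` when `μ > 0`, and the reversed inequalities when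
`μ < 0`. -/
theorem principal_stretch_ordering
    (h M : ℝ) (hκ : 0 < kap h) (hM : 0 ≤ M)
    (f : ℝ → ℝ) (hf : CM M f) (μ : ℝ)
    (φ : ℝ → ℝ)
    (hφC2 : ContDiffOn ℝ 2 φ (Set.Icc 0 1))
    (hφ0 : φ 0 = 0) (hφ'0 : lam1 φ 0 = 1)
    (hφ''0 : derivWithin (lam1 φ) (Set.Icc 0 1) 0 = 0)
    (hφpos : ∀ r ∈ Set.Ioc (0:ℝ) 1, 0 < φ r)
    (hu : ∀ r ∈ Set.Icc (0:ℝ) 1, uu φ r ∈ Uset (del h M))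
    (hODE : ∀ r ∈ Set.Ioc (0:ℝ) 1,
      derivWithin (lam1 φ) (Set.Icc 0 1) r + (2 / r) * (lam1 φ r - φ r / r)
        = V1 h f (uu φ r) * (1 / r) * (lam1 φ r - φ r / r)
          + μ * (kap h + d2 f 1)⁻¹ * r * (vv φ r) ^ (1 - h / 3) * V2 h f (uu φ r)) :
    (0 < μ → ∀ r ∈ Set.Ioc (0:ℝ) 1, φ r / r < lam1 φ r ∧ 1 < φ r / r) ∧
    (μ < 0 → ∀ r ∈ Set.Ioc (0:ℝ) 1, lam1 φ r < φ r / r ∧ φ r / r < 1) :=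
  principal_stretch_ordering_general h M hκ f hf μ φ hφC2 hφ0 hφ'0 hφpos hu hODE
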